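/- Let E be a finite family of closed intervals in ℝ that is laminar (any two intervals are either disjoint in their interiors or one contains the other), such that whenever e₂ ⊊ e₁ with e₁, e₂ ∈ E, the lengths satisfy |e₂| ≤ (1 − ε/4)·|e₁|. Fix a maximal interval pq ∈ E and suppose every interval in E contained in pq has length greater than ε·|pq|. Then the total length of all intervals of E contained in pq is O(ε⁻¹·|pq|); concretely it is at most C·ε⁻¹·|pq| for some absolute constant C. -/

import Mathlib

open MeasureTheory Finset

/-- Pairwise interior-disjoint subintervals of `[a,b]` have total length at most `b - a`. -/
private lemma sum_len_le (s : Finset (ℝ × ℝ)) (a b : ℝ) (hab : a ≤ b)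
    (hsub : ∀ c ∈ s, a ≤ c.1 ∧ c.2 ≤ b ∧ c.1 ≤ c.2)
    (hdisj : (s : Set (ℝ × ℝ)).Pairwise fun c c' =>
      Disjoint (Set.Ioo c.1 c.2) (Set.Ioo c'.1 c'.2)) :
    ∑ c ∈ s, (c.2 - c.1) ≤ b - a := by
  have hnn : ∀ c ∈ s, 0 ≤ c.2 - c.1 := fun c hc => sub_nonneg.mpr (hsub c hc).2.2
  have h1 : volume (⋃ c ∈ s, Set.Ioo c.1 c.2) = ∑ c ∈ s, volume (Set.Ioo c.1 c.2) :=
    measure_biUnion_finset hdisj fun c _ => measurableSet_Ioo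
  have h2 : (⋃ c ∈ s, Set.Ioo c.1 c.2) ⊆ Set.Icc a b := by
    intro x hx
    simp only [Set.mem_iUnion] at hx
    obtain ⟨c, hc, hx1, hx2⟩ := hx
    exact ⟨(hsub c hc).1.trans hx1.le, hx2.le.trans (hsub c hc).2.1⟩
  have h3 : ∑ c ∈ s, volume (Set.Ioo c.1 c.2) ≤ ENNReal.ofReal (b - a) := by
    rw [← h1, ← Real.volume_Icc]
    exact measure_mono h2
  have h4 : ENNReal.ofReal (∑ c ∈ s, (c.2 - c.1)) ≤ ENNReal.ofReal (b - a) := by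
    rw [ENNReal.ofReal_sum_of_nonneg hnn]
    simpa only [Real.volume_Ioo] using h3
  exact (ENNReal.ofReal_le_ofReal_iff (by linarith)).mp h4

private lemma key_lemma (ε : ℝ) (hε0 : 0 < ε) (hε1 : ε < 1) (E : Finset (ℝ × ℝ))
    (hle : ∀ e ∈ E, e.1 ≤ e.2)
    (hlam : ∀ e ∈ E, ∀ f ∈ E,
      Set.Ioo e.1 e.2 ∩ Set.Ioo f.1 f.2 = ∅ ∨
      (e.1 ≤ f.1 ∧ f.2 ≤ e.2) ∨ (f.1 ≤ e.1 ∧ e.2 ≤ f.2))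
    (hdecay : ∀ e ∈ E, ∀ f ∈ E, e.1 ≤ f.1 → f.2 ≤ e.2 → f ≠ e →
      f.2 - f.1 ≤ (1 - ε/4) * (e.2 - e.1))
    (pq : ℝ × ℝ) (hpq : pq ∈ E)
    (hsmall : ∀ e ∈ E, pq.1 ≤ e.1 → e.2 ≤ pq.2 → ε * (pq.2 - pq.1) < e.2 - e.1) :
    ∀ n : ℕ, ∀ e ∈ E, pq.1 ≤ e.1 → e.2 ≤ pq.2 →
      (E.filter fun f => e.1 ≤ f.1 ∧ f.2 ≤ e.2).card ≤ n →
      ε * (pq.2 - pq.1) * ∑ f ∈ E.filter (fun f => e.1 ≤ f.1 ∧ f.2 ≤ e.2), (f.2 - f.1)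
        ≤ 4 * (pq.2 - pq.1) * (e.2 - e.1) + (e.2 - e.1) ^ 2 := by
  intro n
  induction n with
  | zero =>
    intro e heE h1 h2 hcard
    exfalso
    have : e ∈ E.filter fun f => e.1 ≤ f.1 ∧ f.2 ≤ e.2 :=
      mem_filter.mpr ⟨heE, le_rfl, le_rfl⟩
    have := Finset.card_pos.mpr ⟨e, this⟩
    omega
  | succ n ih =>
    intro e heE hepq1 hepq2 hcard
    classical
    have hL : 0 < pq.2 - pq.1 := by
      have := hsmall pq hpq le_rfl le_rfl
      nlinarith
    have hK : 0 < ε * (pq.2 - pq.1) := mul_pos hε0 hL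
    set D := E.filter (fun f => e.1 ≤ f.1 ∧ f.2 ≤ e.2) with hDdef
    have heD : e ∈ D := mem_filter.mpr ⟨heE, le_rfl, le_rfl⟩
    have hDsub : ∀ f ∈ D, f ∈ E ∧ e.1 ≤ f.1 ∧ f.2 ≤ e.2 := by
      intro f hf
      have := mem_filter.mp hf
      exact ⟨this.1, this.2.1, this.2.2⟩
    have hDlen : ∀ f ∈ D, ε * (pq.2 - pq.1) < f.2 - f.1 := by
      intro f hf
      obtain ⟨hfE, h1, h2⟩ := hDsub f hf
      exact hsmall f hfE (hepq1.trans h1) (h2.trans hepq2)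
    have hℓ : ε * (pq.2 - pq.1) < e.2 - e.1 := hDlen e heD
    -- children: maximal proper elements of D
    set ch := D.filter (fun c => c ≠ e ∧ ∀ g ∈ D, g ≠ e → g.1 ≤ c.1 → c.2 ≤ g.2 → g = c)
      with hchdef
    have hchD : ∀ c ∈ ch, c ∈ D ∧ c ≠ e ∧
        (∀ g ∈ D, g ≠ e → g.1 ≤ c.1 → c.2 ≤ g.2 → g = c) := by
      intro c hc
      have := mem_filter.mp hc
      exact ⟨this.1, this.2.1, this.2.2⟩
    -- every proper element lies under a child
    have hcover : ∀ f ∈ D, f ≠ e → ∃ c ∈ ch, c.1 ≤ f.1 ∧ f.2 ≤ c.2 := by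
      intro f hfD hfe
      set T := (D.erase e).filter (fun g => g.1 ≤ f.1 ∧ f.2 ≤ g.2) with hT
      have hfT : f ∈ T := mem_filter.mpr ⟨mem_erase.mpr ⟨hfe, hfD⟩, le_rfl, le_rfl⟩
      obtain ⟨c, hcT, hmax⟩ := T.exists_max_image (fun g => g.2 - g.1) ⟨f, hfT⟩
      obtain ⟨hcD', hc1, hc2⟩ := mem_filter.mp hcT
      have hcD : c ∈ D := (mem_erase.mp hcD').2
      have hce : c ≠ e := (mem_erase.mp hcD').1
      refine ⟨c, mem_filter.mpr ⟨hcD, hce, ?_⟩, hc1, hc2⟩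
      intro g hgD hge hg1 hg2
      by_contra hne
      have hgT : g ∈ T := mem_filter.mpr
        ⟨mem_erase.mpr ⟨hge, hgD⟩, hg1.trans hc1, hc2.trans hg2⟩
      have hdec := hdecay g (hDsub g hgD).1 c (hDsub c hcD).1 hg1 hg2 (Ne.symm hne)
      have hglen := hDlen g hgD
      have hmg := hmax g hgT
      nlinarith
    -- children have pairwise disjoint interiors
    have hchdisj : ∀ c ∈ ch, ∀ c' ∈ ch, c ≠ c' →
        Disjoint (Set.Ioo c.1 c.2) (Set.Ioo c'.1 c'.2) := by
      intro c hc c' hc' hne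
      obtain ⟨hcD, hce, hcmax⟩ := hchD c hc
      obtain ⟨hc'D, hc'e, hc'max⟩ := hchD c' hc'
      rcases hlam c (hDsub c hcD).1 c' (hDsub c' hc'D).1 with h | h | h
      · exact Set.disjoint_iff_inter_eq_empty.mpr h
      · exact absurd (hc'max c hcD hce h.1 h.2) hne
      · exact absurd ((hcmax c' hc'D hc'e h.1 h.2).symm) hne
    -- partition of D.erase e into descendant sets of children
    have hpart : D.erase e = ch.biUnion (fun c => E.filter fun f => c.1 ≤ f.1 ∧ f.2 ≤ c.2) := by
      ext f
      simp only [mem_erase, mem_biUnion, mem_filter]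
      constructor
      · rintro ⟨hfe, hfD⟩
        obtain ⟨c, hc, h1, h2⟩ := hcover f (by exact hfD) hfe
        exact ⟨c, hc, (mem_filter.mp hfD).1, h1, h2⟩
      · rintro ⟨c, hc, hfE, h1, h2⟩
        obtain ⟨hcD, hce, _⟩ := hchD c hc
        obtain ⟨hcE, hce1, hce2⟩ := hDsub c hcD
        refine ⟨?_, mem_filter.mpr ⟨hfE, hce1.trans h1, h2.trans hce2⟩⟩
        rintro rfl
        exact hce (Prod.ext (le_antisymm h1 hce1) (le_antisymm hce2 h2))
    have hdisjU : (↑ch : Set (ℝ × ℝ)).PairwiseDisjoint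
        (fun c => E.filter fun f => c.1 ≤ f.1 ∧ f.2 ≤ c.2) := by
      intro c hc c' hc' hne
      refine Finset.disjoint_left.mpr ?_
      intro f hf hf'
      obtain ⟨hfE, h1, h2⟩ := mem_filter.mp hf
      obtain ⟨_, h1', h2'⟩ := mem_filter.mp hf'
      have hcmem : c ∈ ch := hc
      have hc'mem : c' ∈ ch := hc'
      obtain ⟨hcD, _, _⟩ := hchD c hcmem
      obtain ⟨hc'D, _, _⟩ := hchD c' hc'mem
      obtain ⟨hcE, hce1, hce2⟩ := hDsub c hcD
      have hfD : f ∈ D := mem_filter.mpr ⟨hfE, hce1.trans h1, h2.trans hce2⟩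
      have hflen : 0 < f.2 - f.1 := lt_trans hK (hDlen f hfD)
      have hxmem : (f.1 + f.2) / 2 ∈ Set.Ioo f.1 f.2 := ⟨by linarith, by linarith⟩
      have hm1 : (f.1 + f.2) / 2 ∈ Set.Ioo c.1 c.2 :=
        ⟨lt_of_le_of_lt h1 hxmem.1, lt_of_lt_of_le hxmem.2 h2⟩
      have hm2 : (f.1 + f.2) / 2 ∈ Set.Ioo c'.1 c'.2 :=
        ⟨lt_of_le_of_lt h1' hxmem.1, lt_of_lt_of_le hxmem.2 h2'⟩
      exact Set.disjoint_left.mp (hchdisj c hcmem c' hc'mem hne) hm1 hm2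
    have hsum1 : ∑ f ∈ D, (f.2 - f.1) = (e.2 - e.1) + ∑ f ∈ D.erase e, (f.2 - f.1) :=
      (Finset.add_sum_erase D _ heD).symm
    have hsum2 : ∑ f ∈ D.erase e, (f.2 - f.1)
        = ∑ c ∈ ch, ∑ f ∈ E.filter (fun f => c.1 ≤ f.1 ∧ f.2 ≤ c.2), (f.2 - f.1) := by
      rw [hpart, Finset.sum_biUnion hdisjU]
    -- IH for each child
    have hchIH : ∀ c ∈ ch,
        ε * (pq.2 - pq.1) * ∑ f ∈ E.filter (fun f => c.1 ≤ f.1 ∧ f.2 ≤ c.2), (f.2 - f.1)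
        ≤ 4 * (pq.2 - pq.1) * (c.2 - c.1) + (c.2 - c.1) ^ 2 := by
      intro c hc
      obtain ⟨hcD, hce, _⟩ := hchD c hc
      obtain ⟨hcE, h1, h2⟩ := hDsub c hcD
      apply ih c hcE (hepq1.trans h1) (h2.trans hepq2)
      have hsub : (E.filter fun f => c.1 ≤ f.1 ∧ f.2 ≤ c.2) ⊆ D.erase e := by
        rw [hpart]
        exact Finset.subset_biUnion_of_mem (fun c => E.filter fun f => c.1 ≤ f.1 ∧ f.2 ≤ c.2) hc
      calc (E.filter fun f => c.1 ≤ f.1 ∧ f.2 ≤ c.2).card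
          ≤ (D.erase e).card := card_le_card hsub
        _ = D.card - 1 := card_erase_of_mem heD
        _ ≤ n := by omega
    have hchlen : ∀ c ∈ ch, ε * (pq.2 - pq.1) < c.2 - c.1 := fun c hc => hDlen c (hchD c hc).1
    have hchsmall : ∀ c ∈ ch, c.2 - c.1 ≤ (1 - ε / 4) * (e.2 - e.1) := by
      intro c hc
      obtain ⟨hcD, hce, _⟩ := hchD c hc
      obtain ⟨hcE, h1, h2⟩ := hDsub c hcD
      exact hdecay e heE c hcE h1 h2 hce
    have hchsum : ∑ c ∈ ch, (c.2 - c.1) ≤ e.2 - e.1 := by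
      apply sum_len_le ch e.1 e.2 (hle e heE)
      · intro c hc
        obtain ⟨hcD, _, _⟩ := hchD c hc
        obtain ⟨hcE, h1, h2⟩ := hDsub c hcD
        exact ⟨h1, h2, hle c hcE⟩
      · intro c hc c' hc' hne
        exact hchdisj c hc c' hc' hne
    -- combine
    rw [hsum1, hsum2]
    have hstep : ε * (pq.2 - pq.1) *
        ∑ c ∈ ch, ∑ f ∈ E.filter (fun f => c.1 ≤ f.1 ∧ f.2 ≤ c.2), (f.2 - f.1)
        ≤ ∑ c ∈ ch, (4 * (pq.2 - pq.1) * (c.2 - c.1) + (c.2 - c.1) ^ 2) := by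
      rw [Finset.mul_sum]
      exact Finset.sum_le_sum hchIH
    have hmain : ∑ c ∈ ch, (4 * (pq.2 - pq.1) * (c.2 - c.1) + (c.2 - c.1) ^ 2)
        ≤ 4 * (pq.2 - pq.1) * (e.2 - e.1) + (e.2 - e.1) ^ 2
          - ε * (pq.2 - pq.1) * (e.2 - e.1) := by
      rcases lt_or_ge ch.card 2 with hcd | hcd
      · interval_cases h : ch.card
        · -- empty
          have : ch = ∅ := Finset.card_eq_zero.mp h
          rw [this]
          simp only [Finset.sum_empty]
          nlinarith
        · -- singleton
          obtain ⟨c, hc⟩ := Finset.card_eq_one.mp h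
          have hcm : c ∈ ch := by rw [hc]; exact mem_singleton_self c
          have h1 := hchsmall c hcm
          have h2 := hchlen c hcm
          rw [hc, Finset.sum_singleton]
          nlinarith [sq_nonneg (e.2 - e.1 - (c.2 - c.1))]
      · -- at least two children
        have hc_small : ∀ c ∈ ch, c.2 - c.1 ≤ (e.2 - e.1) - ε * (pq.2 - pq.1) := by
          intro c hc
          obtain ⟨c', hc', hne⟩ := Finset.exists_mem_ne hcd c
          have hpair : (c.2 - c.1) + (c'.2 - c'.1) ≤ ∑ x ∈ ch, (x.2 - x.1) := by
            have hsb : ({c, c'} : Finset (ℝ × ℝ)) ⊆ ch :=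
              Finset.insert_subset_iff.mpr ⟨hc, Finset.singleton_subset_iff.mpr hc'⟩
            have := Finset.sum_le_sum_of_subset_of_nonneg hsb
              (fun x hx _ => le_of_lt (lt_trans hK (hchlen x hx)))
            rwa [Finset.sum_pair (Ne.symm hne)] at this
          have := hchlen c' hc'
          linarith
        have hsq : ∑ c ∈ ch, (c.2 - c.1) ^ 2
            ≤ ((e.2 - e.1) - ε * (pq.2 - pq.1)) * ∑ c ∈ ch, (c.2 - c.1) := by
          rw [Finset.mul_sum]
          apply Finset.sum_le_sum
          intro c hc
          have h1 := hc_small c hc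
          have h2 := hchlen c hc
          nlinarith
        have hsumnn : 0 ≤ ∑ c ∈ ch, (c.2 - c.1) :=
          Finset.sum_nonneg fun c hc => le_of_lt (lt_trans hK (hchlen c hc))
        have hexp : ∑ c ∈ ch, (4 * (pq.2 - pq.1) * (c.2 - c.1) + (c.2 - c.1) ^ 2)
            = 4 * (pq.2 - pq.1) * (∑ c ∈ ch, (c.2 - c.1)) + ∑ c ∈ ch, (c.2 - c.1) ^ 2 := by
          rw [Finset.sum_add_distrib, Finset.mul_sum]
        rw [hexp]
        have h4L : 4 * (pq.2 - pq.1) * (∑ c ∈ ch, (c.2 - c.1))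
            ≤ 4 * (pq.2 - pq.1) * (e.2 - e.1) :=
          mul_le_mul_of_nonneg_left hchsum (by linarith)
        have hsq2 : ((e.2 - e.1) - ε * (pq.2 - pq.1)) * ∑ c ∈ ch, (c.2 - c.1)
            ≤ ((e.2 - e.1) - ε * (pq.2 - pq.1)) * (e.2 - e.1) :=
          mul_le_mul_of_nonneg_left hchsum (by linarith)
        nlinarith
    linarith [hstep, hmain]

/-- Laminar families of intervals with geometric length decay along containment:
the total length of intervals contained in a maximal interval `pq`, all of length
greater than `ε·|pq|`, is `O(ε⁻¹·|pq|)`. Intervals are encoded as pairs `(e.1, e.2)`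
with `e.1 ≤ e.2`. -/
theorem stmt_9 :
    ∃ C : ℝ, 0 < C ∧ ∀ (ε : ℝ), 0 < ε → ε < 1 →
      ∀ (E : Finset (ℝ × ℝ)),
        (∀ e ∈ E, e.1 ≤ e.2) →
        (∀ e ∈ E, ∀ f ∈ E,
          Set.Ioo e.1 e.2 ∩ Set.Ioo f.1 f.2 = ∅ ∨
          (e.1 ≤ f.1 ∧ f.2 ≤ e.2) ∨ (f.1 ≤ e.1 ∧ e.2 ≤ f.2)) →
        (∀ e ∈ E, ∀ f ∈ E, e.1 ≤ f.1 → f.2 ≤ e.2 → f ≠ e →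
          f.2 - f.1 ≤ (1 - ε/4) * (e.2 - e.1)) →
        ∀ pq ∈ E,
          (∀ e ∈ E, e.1 ≤ pq.1 → pq.2 ≤ e.2 → e = pq) →
          (∀ e ∈ E, pq.1 ≤ e.1 → e.2 ≤ pq.2 →
            ε * (pq.2 - pq.1) < e.2 - e.1) →
          ∑ e ∈ E.filter (fun e => pq.1 ≤ e.1 ∧ e.2 ≤ pq.2), (e.2 - e.1)
            ≤ C * ε⁻¹ * (pq.2 - pq.1) := by
  refine ⟨5, by norm_num, ?_⟩
  intro ε hε0 hε1 E hle hlam hdecay pq hpq hmax hsmall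
  have hL : 0 < pq.2 - pq.1 := by
    have := hsmall pq hpq le_rfl le_rfl
    nlinarith
  have hK : 0 < ε * (pq.2 - pq.1) := mul_pos hε0 hL
  have hkey := key_lemma ε hε0 hε1 E hle hlam hdecay pq hpq hsmall
    (E.filter fun f => pq.1 ≤ f.1 ∧ f.2 ≤ pq.2).card pq hpq le_rfl le_rfl le_rfl
  have h1 : ε * (pq.2 - pq.1) *
      (∑ e ∈ E.filter (fun e => pq.1 ≤ e.1 ∧ e.2 ≤ pq.2), (e.2 - e.1))
      ≤ ε * (pq.2 - pq.1) * (5 * ε⁻¹ * (pq.2 - pq.1)) := by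
    have heq : ε * (pq.2 - pq.1) * (5 * ε⁻¹ * (pq.2 - pq.1))
        = 5 * ((pq.2 - pq.1) * (pq.2 - pq.1)) := by
      field_simp
    rw [heq]
    nlinarith [hkey]
  exact le_of_mul_le_mul_left h1 hK
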